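/- Let H be a linear forest, let G be a complete k-partite graph with parts A_1, …, A_k, and fix two parts A_1, A_2. Suppose G' is obtained from G by replacing the complete bipartite graph induced on A_1 ∪ A_2 by another complete bipartite graph on the same vertex set A_1 ∪ A_2 (keeping all edges between A_1 ∪ A_2 and the remaining parts, and all edges among the remaining parts). If for every linear forest H' that is a subgraph of H, the number of copies of H' inside A_1 ∪ A_2 does not decrease when passing from G to G', then N(H,G') ≥ N(H,G). -/

import Mathlib

open SimpleGraph

/-- The number of copies of `H` in `G`, i.e. the number of subgraphs of `G` isomorphic to `H`. -/
noncomputable def numCopies {α β : Type*} (H : SimpleGraph α) (G : SimpleGraph β) : ℕ :=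
  Nat.card {G' : G.Subgraph // Nonempty (H ≃g G'.coe)}

/-- `G` contains a subgraph isomorphic to `F`. -/
def Contains {α β : Type*} (F : SimpleGraph α) (G : SimpleGraph β) : Prop :=
  ∃ f : α → β, Function.Injective f ∧ ∀ a b, F.Adj a b → G.Adj (f a) (f b)

/-- A linear forest: an acyclic graph of maximum degree at most 2,
equivalently a disjoint union of paths. -/
def IsLinearForest {α : Type*} (H : SimpleGraph α) : Prop :=
  H.IsAcyclic ∧ ∀ v, (H.neighborSet v).ncard ≤ 2

/-- `G` is a complete `k`-partite graph with parts given by `f`. -/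
def IsCompleteKPartite {V : Type*} (k : ℕ) (G : SimpleGraph V) : Prop :=
  ∃ f : V → Fin k, ∀ u v, G.Adj u v ↔ f u ≠ f v

/-!
Count labelled copies (injective homomorphisms) instead of copies: there are
`N(H, G) * |Aut H|` of them. Sort a labelled copy `φ` of `H` in `G` by `B = φ⁻¹(W)`. Since every
vertex of `W` is adjacent to every vertex outside `W`, in `G` as well as in `G'`, such `φ` are
exactly the pairs of a labelled copy of `H[B]` in `G[W]` and one of `H[Bᶜ]` in `G[Wᶜ]`. The second
factor is the same for `G` and `G'`, and the first one does not decrease because `H[B]` is a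
linear forest contained in `H`.
-/

namespace SimpleGraph

variable {α β : Type*} {H : SimpleGraph α} {G : SimpleGraph β}

instance [Finite α] [Finite β] : Finite (Copy H G) :=
  .of_injective _ DFunLike.coe_injective

instance {γ : Type*} [Finite α] [Finite γ] {K : SimpleGraph γ} : Finite (H ≃g K) :=
  .of_injective _ DFunLike.coe_injective

def Subgraph.copyOfIso (S : G.Subgraph) (e : H ≃g S.coe) : Copy H G :=
  ⟨S.hom.comp e.toHom, Subgraph.hom_injective.comp e.injective⟩

lemma Subgraph.toSubgraph_copyOfIso (S : G.Subgraph) (e : H ≃g S.coe) :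
    (S.copyOfIso e).toSubgraph = S := by
  simp [Copy.toSubgraph, copyOfIso, Subgraph.map_comp]

lemma bijective_copyOfIso :
    Function.Bijective fun p : Σ S : {S : G.Subgraph // Nonempty (H ≃g S.coe)}, H ≃g S.1.coe =>
      p.1.1.copyOfIso p.2 := by
  constructor
  · rintro ⟨⟨S, hS⟩, e⟩ ⟨⟨S', hS'⟩, e'⟩ h
    obtain rfl : S = S' := by
      rw [← S.toSubgraph_copyOfIso e, ← S'.toSubgraph_copyOfIso e']
      exact congrArg Copy.toSubgraph h
    obtain rfl : e = e' := RelIso.ext fun a => Subtype.ext (congrArg (· a) h)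
    rfl
  · intro f
    exact ⟨⟨⟨f.toSubgraph, ⟨f.isoToSubgraph⟩⟩, f.isoToSubgraph⟩, rfl⟩

lemma natCard_iso_eq_of_nonempty {γ : Type*} {K : SimpleGraph γ} (h : Nonempty (H ≃g K)) :
    Nat.card (H ≃g K) = Nat.card (H ≃g H) :=
  Nat.card_congr
    { toFun e := e.trans h.some.symm
      invFun σ := σ.trans h.some
      left_inv e := by ext; simp
      right_inv σ := by ext; simp }

theorem natCard_copy_eq_numCopies_mul [Finite α] [Finite β] :
    Nat.card (Copy H G) = numCopies H G * Nat.card (H ≃g H) := by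
  classical
  have := Fintype.ofFinite G.Subgraph
  rw [← Nat.card_eq_of_bijective _ bijective_copyOfIso, Nat.card_sigma, numCopies,
    Nat.card_eq_fintype_card, ← Finset.card_univ, ← smul_eq_mul, ← Finset.sum_const]
  exact Finset.sum_congr rfl fun S _ => natCard_iso_eq_of_nonempty S.2

theorem natCard_copy_le_natCard_copy_iff [Finite α] [Finite β] {G' : SimpleGraph β} :
    Nat.card (Copy H G) ≤ Nat.card (Copy H G') ↔ numCopies H G ≤ numCopies H G' := by
  have : Nonempty (H ≃g H) := ⟨.refl⟩
  rw [natCard_copy_eq_numCopies_mul, natCard_copy_eq_numCopies_mul]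
  exact Nat.mul_le_mul_right_iff Nat.card_pos

end SimpleGraph

lemma IsLinearForest.of_copy {α β : Type*} [Finite β] {F : SimpleGraph α} {H : SimpleGraph β}
    (hH : IsLinearForest H) (f : Copy F H) : IsLinearForest F :=
  ⟨hH.1.comap f.toHom f.injective, fun v =>
    (Set.ncard_le_ncard_of_injOn f (fun _ hw => f.toHom.apply_mem_neighborSet hw)
      f.injective.injOn).trans (hH.2 (f v))⟩

lemma IsLinearForest.induce {α : Type*} [Finite α] {H : SimpleGraph α} (hH : IsLinearForest H)
    (B : Set α) : IsLinearForest (H.induce B) :=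
  hH.of_copy (Copy.induce H B)

namespace SimpleGraph.Copy

variable {α β : Type*} {H : SimpleGraph α} {G : SimpleGraph β} {B : Set α} {W : Set β}

def restrict (φ : Copy H G) (h : Set.MapsTo φ B W) : Copy (H.induce B) (G.induce W) :=
  ⟨induceHom φ.toHom h, induceHom_injective _ _ φ.injective.injOn⟩

open Classical in
/-- Glue a copy of `H[B]` in `G[W]` and a copy of `H[Bᶜ]` in `G[Wᶜ]`; edges of `H` between
`B` and `Bᶜ` are taken care of by the completeness of `G` between `W` and `Wᶜ`. -/
noncomputable def piecewise (hG : G.IsCompleteBetween W Wᶜ) (ψ : Copy (H.induce B) (G.induce W))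
    (ρ : Copy (H.induce Bᶜ) (G.induce Wᶜ)) : Copy H G where
  toHom :=
    { toFun a := if h : a ∈ B then ψ ⟨a, h⟩ else ρ ⟨a, h⟩
      map_rel' {a b} hab := by
        by_cases ha : a ∈ B <;> by_cases hb : b ∈ B <;> simp only [ha, hb, dite_true, dite_false]
        · exact ψ.toHom.map_adj (show (H.induce B).Adj ⟨a, ha⟩ ⟨b, hb⟩ from hab)
        · exact hG (ψ _).2 (ρ _).2
        · exact (hG (ψ _).2 (ρ _).2).symm
        · exact ρ.toHom.map_adj (show (H.induce Bᶜ).Adj ⟨a, ha⟩ ⟨b, hb⟩ from hab) }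
  injective' a b hab := by
    by_cases ha : a ∈ B <;> by_cases hb : b ∈ B <;>
      simp only [RelHom.coeFn_mk, ha, hb, dite_true, dite_false] at hab
    · exact congrArg Subtype.val (ψ.injective (Subtype.ext hab))
    · exact absurd (hab ▸ (ψ _).2) (ρ ⟨b, hb⟩).2
    · exact absurd (ψ ⟨b, hb⟩).2 (hab ▸ (ρ _).2)
    · exact congrArg Subtype.val (ρ.injective (Subtype.ext hab))

variable (hG : G.IsCompleteBetween W Wᶜ) (ψ : Copy (H.induce B) (G.induce W))
  (ρ : Copy (H.induce Bᶜ) (G.induce Wᶜ))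

lemma piecewise_apply_of_mem {a : α} (ha : a ∈ B) : piecewise hG ψ ρ a = ψ ⟨a, ha⟩ :=
  dif_pos ha

lemma piecewise_apply_of_notMem {a : α} (ha : a ∉ B) : piecewise hG ψ ρ a = ρ ⟨a, ha⟩ :=
  dif_neg ha

lemma preimage_piecewise : piecewise hG ψ ρ ⁻¹' W = B := by
  ext a
  by_cases ha : a ∈ B
  · simp only [Set.mem_preimage, piecewise_apply_of_mem hG ψ ρ ha, (ψ _).2, ha]
  · simp only [Set.mem_preimage, piecewise_apply_of_notMem hG ψ ρ ha, ha, iff_false]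
    exact (ρ _).2

end SimpleGraph.Copy

namespace SimpleGraph

variable {α β : Type*} {H : SimpleGraph α} {G : SimpleGraph β} {W : Set β}

noncomputable def copyPreimageEquiv (hG : G.IsCompleteBetween W Wᶜ) (B : Set α) :
    {φ : Copy H G // φ ⁻¹' W = B} ≃
      Copy (H.induce B) (G.induce W) × Copy (H.induce Bᶜ) (G.induce Wᶜ) where
  toFun φ := (φ.1.restrict fun _ ha => φ.2.ge ha, φ.1.restrict fun _ ha hW => ha (φ.2.le hW))
  invFun p := ⟨Copy.piecewise hG p.1 p.2, Copy.preimage_piecewise hG p.1 p.2⟩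
  left_inv φ := by
    ext a
    by_cases ha : a ∈ B
    exacts [Copy.piecewise_apply_of_mem hG _ _ ha, Copy.piecewise_apply_of_notMem hG _ _ ha]
  right_inv p := by
    ext a
    exacts [Copy.piecewise_apply_of_mem hG _ _ a.2, Copy.piecewise_apply_of_notMem hG _ _ a.2]

theorem natCard_copy_eq_sum [Fintype α] [Finite β] (hG : G.IsCompleteBetween W Wᶜ) :
    Nat.card (Copy H G) = ∑ B : Set α,
      Nat.card (Copy (H.induce B) (G.induce W)) * Nat.card (Copy (H.induce Bᶜ) (G.induce Wᶜ)) := by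
  classical
  rw [← Nat.card_congr (Equiv.sigmaFiberEquiv fun φ : Copy H G => φ ⁻¹' W), Nat.card_sigma]
  simp_rw [Nat.card_congr (copyPreimageEquiv hG _), Nat.card_prod]

theorem natCard_copy_le_of_induce [Fintype α] [Finite β] {G' : SimpleGraph β}
    (hG : G.IsCompleteBetween W Wᶜ) (hG' : G'.IsCompleteBetween W Wᶜ)
    (hout : G.induce Wᶜ = G'.induce Wᶜ)
    (hin : ∀ B : Set α,
      Nat.card (Copy (H.induce B) (G.induce W)) ≤ Nat.card (Copy (H.induce B) (G'.induce W))) :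
    Nat.card (Copy H G) ≤ Nat.card (Copy H G') := by
  rw [natCard_copy_eq_sum hG, natCard_copy_eq_sum hG', hout]
  gcongr with B
  exact hin B

end SimpleGraph

theorem replace_bipartite_part_not_decrease {α V : Type*} [Fintype α] [Fintype V]
    (H : SimpleGraph α) (hH : IsLinearForest H)
    (k : ℕ) (hk : 2 ≤ k) (f : V → Fin k)
    (G : SimpleGraph V) (hG : ∀ u v, G.Adj u v ↔ f u ≠ f v)
    (W : Set V)
    (hW : W = {v | f v = (⟨0, by omega⟩ : Fin k) ∨ f v = (⟨1, by omega⟩ : Fin k)})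
    (G' : SimpleGraph V)
    (hG'out : ∀ u v, (u ∉ W ∨ v ∉ W) → (G'.Adj u v ↔ G.Adj u v))
    (hmono : ∀ H' : H.Subgraph, IsLinearForest H'.coe →
      numCopies H'.coe (SimpleGraph.induce W G) ≤ numCopies H'.coe (SimpleGraph.induce W G')) :
    numCopies H G ≤ numCopies H G' := by
  have hcross : G.IsCompleteBetween W Wᶜ := by
    intro u hu v hv
    subst hW
    rw [hG]
    intro huv
    exact hv (show f v = _ ∨ f v = _ from huv ▸ hu)
  have hcross' : G'.IsCompleteBetween W Wᶜ := fun u hu v hv =>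
    (hG'out u v (.inr hv)).2 (hcross hu hv)
  have hout : G.induce Wᶜ = G'.induce Wᶜ := by
    ext u v
    exact (hG'out u v (.inl u.2)).symm
  rw [← natCard_copy_le_natCard_copy_iff]
  refine natCard_copy_le_of_induce hcross hcross' hout fun B => ?_
  rw [natCard_copy_le_natCard_copy_iff, induce_eq_coe_induce_top]
  exact hmono _ (induce_eq_coe_induce_top (G := H) B ▸ hH.induce B)
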